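/- arXiv:1703.08163 — 4 statements merged into one kernel-verified Lean document; each statement's English description precedes it below -/
import Mathlib

section
/- There exists α with 0 < α ≤ 1/2 and d_0 ∈ ℕ such that for all integers d > d_0 and all real z with 0 ≤ z/√d ≤ π/2, one has cos^{d-2}(z/√d) ≤ exp(−α z²). -/
open Real

/-- Domination lemma, item 1: there exist `0 < α ≤ 1/2` and `d₀` such that for `d > d₀`
and `0 ≤ z` with `z/√d ≤ π/2`, one has `cos^{d-2}(z/√d) ≤ exp(-α z²)`. -/
theorem cos_pow_le_exp_bound :
    ∃ α : ℝ, 0 < α ∧ α ≤ 1 / 2 ∧ ∃ d₀ : ℕ, ∀ d : ℕ, d₀ < d → ∀ z : ℝ, 0 ≤ z →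
      z / Real.sqrt d ≤ π / 2 →
      Real.cos (z / Real.sqrt d) ^ (d - 2) ≤ Real.exp (-α * z ^ 2) := by
  have hπ : 0 < π := Real.pi_pos
  have hπ2 : (0:ℝ) < π ^ 2 := by positivity
  refine ⟨1 / π ^ 2, by positivity, ?_, 4, ?_⟩
  · rw [div_le_div_iff₀ hπ2 two_pos]
    nlinarith [Real.pi_gt_three]
  intro d hd z hz hle
  set x := z / Real.sqrt d with hxdef
  have hdpos : (0:ℝ) < d := by exact_mod_cast Nat.lt_of_lt_of_le (by norm_num) hd.le
  have hsq : (0:ℝ) < Real.sqrt d := Real.sqrt_pos.mpr hdpos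
  have hx0 : 0 ≤ x := div_nonneg hz hsq.le
  have habs : |x| ≤ π := by
    rw [abs_of_nonneg hx0]; linarith
  have hcos0 : 0 ≤ Real.cos x := Real.cos_nonneg_of_mem_Icc ⟨by linarith, hle⟩
  have h1 : Real.cos x ≤ Real.exp (-(2 / π ^ 2) * x ^ 2) := by
    calc Real.cos x ≤ 1 - 2 / π ^ 2 * x ^ 2 := Real.cos_le_one_sub_mul_cos_sq habs
    _ ≤ Real.exp (-(2 / π ^ 2) * x ^ 2) := by
        have := Real.add_one_le_exp (-(2 / π ^ 2) * x ^ 2); linarith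
  have h2 : Real.cos x ^ (d - 2) ≤ Real.exp (-(2 / π ^ 2) * x ^ 2) ^ (d - 2) :=
    pow_le_pow_left₀ hcos0 h1 _
  rw [← Real.exp_nat_mul] at h2
  refine h2.trans (Real.exp_le_exp.mpr ?_)
  have hx2 : x ^ 2 = z ^ 2 / d := by
    rw [hxdef, div_pow, Real.sq_sqrt hdpos.le]
  rw [hx2]
  have hd2 : ((d - 2 : ℕ) : ℝ) = (d : ℝ) - 2 := by
    have : 2 ≤ d := by omega
    push_cast [Nat.cast_sub this]; ring
  rw [hd2]
  have hd4 : (4:ℝ) ≤ d := by exact_mod_cast hd.le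
  have key : ((d:ℝ) - 2) * (2 / π ^ 2) * (z ^ 2 / d) ≥ (1 / π ^ 2) * z ^ 2 := by
    rw [ge_iff_le,
      show (1 / π ^ 2) * z ^ 2 = z ^ 2 / π ^ 2 from by ring,
      show ((d:ℝ) - 2) * (2 / π ^ 2) * (z ^ 2 / d) = (((d:ℝ) - 2) * 2 * z ^ 2) / (π ^ 2 * d)
        from by field_simp,
      div_le_div_iff₀ hπ2 (by positivity)]
    nlinarith [mul_nonneg (mul_nonneg (sub_nonneg.mpr hd4) (sq_nonneg z)) hπ2.le]
  have e : ((d:ℝ) - 2) * (-(2 / π ^ 2) * (z ^ 2 / d)) = -(((d:ℝ) - 2) * (2 / π ^ 2) * (z ^ 2 / d)) := by ring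
  rw [e, neg_mul, neg_le_neg_iff]
  exact key
end

section
/- There exists α with 0 < α ≤ 1/2 and d_0 ∈ ℕ such that for all d > d_0 and all z ≥ 0 with z/√d ≤ π/2, one has √d · cos^{d-1}(z/√d) · sin(z/√d) ≤ z · exp(−α z²). -/
open Real

/-- Domination lemma, item 2: `√d cos^{d-1}(z/√d) sin(z/√d) ≤ z exp(-α z²)`. -/
theorem kostlan_A_bound :
    ∃ α : ℝ, 0 < α ∧ α ≤ 1 / 2 ∧ ∃ d₀ : ℕ, ∀ d : ℕ, d₀ < d → ∀ z : ℝ, 0 ≤ z →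
      z / Real.sqrt d ≤ π / 2 →
      Real.sqrt d * Real.cos (z / Real.sqrt d) ^ (d - 1) * Real.sin (z / Real.sqrt d)
        ≤ z * Real.exp (-α * z ^ 2) := by
  have hπ : (0:ℝ) < π := pi_pos
  refine ⟨1 / π ^ 2, by positivity, ?_, 1, ?_⟩
  · have h3 : (3:ℝ) ≤ π := pi_gt_three.le
    rw [div_le_div_iff₀ (by positivity) (by norm_num)]
    nlinarith
  intro d hd z hz hzpi
  have hd2 : (2:ℝ) ≤ (d:ℝ) := by exact_mod_cast hd
  have hdpos : (0:ℝ) < (d:ℝ) := by linarith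
  have hs : (0:ℝ) < Real.sqrt d := Real.sqrt_pos.mpr hdpos
  set ψ := z / Real.sqrt d with hψdef
  have hψ0 : 0 ≤ ψ := div_nonneg hz hs.le
  have hcos : 0 ≤ Real.cos ψ := Real.cos_nonneg_of_mem_Icc ⟨by linarith, hzpi⟩
  have hsin : Real.sin ψ ≤ ψ := Real.sin_le hψ0
  have hjordan : 2 / π * ψ ≤ Real.sin ψ := Real.mul_le_sin hψ0 hzpi
  -- cos ψ ^ 2 ≤ exp (-(4/π^2) ψ^2)
  have key : Real.cos ψ ^ 2 ≤ Real.exp (-(4 / π ^ 2) * ψ ^ 2) := by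
    have h1 : Real.cos ψ ^ 2 = 1 - Real.sin ψ ^ 2 := by
      have := Real.sin_sq_add_cos_sq ψ; linarith
    have h2 : 1 - Real.sin ψ ^ 2 ≤ Real.exp (-(Real.sin ψ ^ 2)) := by
      linarith [Real.add_one_le_exp (-(Real.sin ψ ^ 2))]
    have h4 : (2 / π * ψ) ^ 2 ≤ Real.sin ψ ^ 2 :=
      pow_le_pow_left₀ (by positivity) hjordan 2
    have h5 : (2 / π * ψ) ^ 2 = 4 / π ^ 2 * ψ ^ 2 := by
      field_simp; ring
    have h3 : -(Real.sin ψ ^ 2) ≤ -(4 / π ^ 2) * ψ ^ 2 := by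
      rw [neg_mul]; rw [h5] at h4; linarith
    calc Real.cos ψ ^ 2 = 1 - Real.sin ψ ^ 2 := h1
      _ ≤ Real.exp (-(Real.sin ψ ^ 2)) := h2
      _ ≤ _ := Real.exp_le_exp.mpr h3
  -- cos ψ ≤ exp (-(2/π^2) ψ^2)
  have hcosle : Real.cos ψ ≤ Real.exp (-(2 / π ^ 2) * ψ ^ 2) := by
    have hEsq : Real.exp (-(2 / π ^ 2) * ψ ^ 2) ^ 2 = Real.exp (-(4 / π ^ 2) * ψ ^ 2) := by
      rw [sq, ← Real.exp_add]; ring_nf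
    nlinarith [Real.exp_pos (-(2 / π ^ 2) * ψ ^ 2), key, hcos]
  have hn : ((d - 1 : ℕ) : ℝ) = (d:ℝ) - 1 := by
    have : 1 ≤ d := by omega
    push_cast [this]; ring
  have hpow : Real.cos ψ ^ (d - 1) ≤ Real.exp (-(2 / π ^ 2) * ψ ^ 2 * ((d:ℝ) - 1)) := by
    calc Real.cos ψ ^ (d - 1)
        ≤ Real.exp (-(2 / π ^ 2) * ψ ^ 2) ^ (d - 1) := pow_le_pow_left₀ hcos hcosle _
      _ = Real.exp (((d - 1 : ℕ) : ℝ) * (-(2 / π ^ 2) * ψ ^ 2)) := (Real.exp_nat_mul _ _).symm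
      _ = _ := by rw [hn]; ring_nf
  have hψsq : ψ ^ 2 = z ^ 2 / (d:ℝ) := by
    rw [hψdef, div_pow, Real.sq_sqrt hdpos.le]
  have hexp : Real.exp (-(2 / π ^ 2) * ψ ^ 2 * ((d:ℝ) - 1))
      ≤ Real.exp (-(1 / π ^ 2) * z ^ 2) := by
    apply Real.exp_le_exp.mpr
    rw [hψsq]
    have e1 : (2 / π ^ 2) * (z ^ 2 / (d:ℝ)) * ((d:ℝ) - 1) - 1 / π ^ 2 * z ^ 2
        = (z ^ 2 * ((d:ℝ) - 2)) / (π ^ 2 * (d:ℝ)) := by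
      field_simp; ring
    have e2 : 0 ≤ (z ^ 2 * ((d:ℝ) - 2)) / (π ^ 2 * (d:ℝ)) := by
      apply div_nonneg (mul_nonneg (by positivity) (by linarith)) (by positivity)
    nlinarith [e1, e2]
  have hzψ : Real.sqrt d * ψ = z := by
    rw [hψdef, mul_div_cancel₀ _ hs.ne']
  calc Real.sqrt d * Real.cos ψ ^ (d - 1) * Real.sin ψ
      ≤ Real.sqrt d * Real.cos ψ ^ (d - 1) * ψ := by
        apply mul_le_mul_of_nonneg_left hsin (by positivity)
    _ = z * Real.cos ψ ^ (d - 1) := by rw [mul_right_comm, hzψ]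
    _ ≤ z * Real.exp (-(1 / π ^ 2) * z ^ 2) :=
        mul_le_mul_of_nonneg_left (hpow.trans hexp) hz
end

section
/- There exists α with 0 < α ≤ 1/2 and d_0 ∈ ℕ such that for all d > d_0 and all z ≥ 0 with z/√d ≤ π/2, one has |cos^d(z/√d) − (d−1) cos^{d−2}(z/√d) sin²(z/√d)| ≤ (1 + z²) exp(−α z²). -/
open Real

/-! On `|x| ≤ π` one has `cos x ≤ 1 - 2x²/π² ≤ exp (-2x²/π²)`. With `x = z/√d`, the powers
`cos^d x` and `cos^(d-2) x` are therefore at most `exp (-z²/π²)` once `d ≥ 4`, while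
`(d - 1) sin² x ≤ d x² = z²`; so `α = 1/π²` works. -/

namespace Real

theorem cos_le_exp_neg_mul_sq {x : ℝ} (hx : |x| ≤ π) : cos x ≤ exp (-(2 / π ^ 2) * x ^ 2) := by
  have := add_one_le_exp (-(2 / π ^ 2) * x ^ 2)
  linarith [cos_le_one_sub_mul_cos_sq hx]

theorem cos_pow_le_exp {x : ℝ} (hx : |x| ≤ π / 2) (k : ℕ) :
    cos x ^ k ≤ exp (-(2 / π ^ 2) * k * x ^ 2) := by
  have hcos : 0 ≤ cos x := cos_nonneg_of_mem_Icc (abs_le.mp hx)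
  calc cos x ^ k ≤ exp (-(2 / π ^ 2) * x ^ 2) ^ k :=
        pow_le_pow_left₀ hcos (cos_le_exp_neg_mul_sq (hx.trans (by linarith [pi_pos]))) k
    _ = exp (-(2 / π ^ 2) * k * x ^ 2) := by rw [← exp_nat_mul]; ring_nf

end Real

theorem cos_div_sqrt_pow_le_exp {d k : ℕ} (hd : 0 < d) (hkd : d ≤ 2 * k) {z : ℝ}
    (hz : |z / √d| ≤ π / 2) : cos (z / √d) ^ k ≤ exp (-(1 / π ^ 2) * z ^ 2) := by
  have hd' : (0 : ℝ) < d := by exact_mod_cast hd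
  refine (cos_pow_le_exp hz k).trans (exp_le_exp.mpr ?_)
  rw [div_pow, sq_sqrt hd'.le, neg_mul, neg_mul, neg_mul, neg_le_neg_iff,
    show 2 / π ^ 2 * k * (z ^ 2 / d) = 1 / π ^ 2 * z ^ 2 * (2 * k / d) by ring]
  exact le_mul_of_one_le_right (by positivity) ((one_le_div hd').mpr (by exact_mod_cast hkd))

theorem sub_one_mul_sin_div_sqrt_sq_le (d : ℕ) (z : ℝ) :
    ((d : ℝ) - 1) * sin (z / √d) ^ 2 ≤ z ^ 2 := by
  have hsin : ((d : ℝ) - 1) * sin (z / √d) ^ 2 ≤ d * (z / √d) ^ 2 :=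
    mul_le_mul (by linarith) sin_sq_le_sq (sq_nonneg _) (Nat.cast_nonneg d)
  rcases Nat.eq_zero_or_pos d with rfl | hd
  · simpa using sq_nonneg z
  · have hd' : (0 : ℝ) < d := by exact_mod_cast hd
    rwa [div_pow, sq_sqrt hd'.le, mul_div_cancel₀ _ hd'.ne'] at hsin

/-- Domination lemma, item 3: bound on `|B(z/√d)|`. -/
theorem kostlan_B_bound :
    ∃ α : ℝ, 0 < α ∧ α ≤ 1 / 2 ∧ ∃ d₀ : ℕ, ∀ d : ℕ, d₀ < d → ∀ z : ℝ, 0 ≤ z →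
      z / Real.sqrt d ≤ π / 2 →
      |Real.cos (z / Real.sqrt d) ^ d
        - (d - 1 : ℝ) * Real.cos (z / Real.sqrt d) ^ (d - 2)
          * Real.sin (z / Real.sqrt d) ^ 2|
        ≤ (1 + z ^ 2) * Real.exp (-α * z ^ 2) := by
  refine ⟨1 / π ^ 2, by positivity, ?_, 3, fun d hd z hz hzd => ?_⟩
  · rw [div_le_div_iff₀ (by positivity) two_pos]
    nlinarith [pi_gt_three]
  have hψ : |z / √d| ≤ π / 2 := by rwa [abs_of_nonneg (by positivity)]
  have hcos : 0 ≤ cos (z / √d) := cos_nonneg_of_mem_Icc (abs_le.mp hψ)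
  set E := exp (-(1 / π ^ 2) * z ^ 2)
  have hfirst : cos (z / √d) ^ d ≤ E := cos_div_sqrt_pow_le_exp (by omega) (by omega) hψ
  have hsecond : (d - 1 : ℝ) * cos (z / √d) ^ (d - 2) * sin (z / √d) ^ 2 ≤ z ^ 2 * E := by
    have hpow : cos (z / √d) ^ (d - 2) ≤ E := cos_div_sqrt_pow_le_exp (by omega) (by omega) hψ
    calc (d - 1 : ℝ) * cos (z / √d) ^ (d - 2) * sin (z / √d) ^ 2
        = ((d : ℝ) - 1) * sin (z / √d) ^ 2 * cos (z / √d) ^ (d - 2) := by ring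
      _ ≤ z ^ 2 * E :=
        mul_le_mul (sub_one_mul_sin_div_sqrt_sq_le d z) hpow (pow_nonneg hcos _) (sq_nonneg z)
  have hsecond_nonneg : 0 ≤ (d - 1 : ℝ) * cos (z / √d) ^ (d - 2) * sin (z / √d) ^ 2 := by
    have : (1 : ℝ) ≤ d := by exact_mod_cast (by omega : 1 ≤ d)
    exact mul_nonneg (mul_nonneg (sub_nonneg.mpr this) (pow_nonneg hcos _)) (sq_nonneg _)
  refine abs_sub_le_of_nonneg_of_le (pow_nonneg hcos _) ?_ hsecond_nonneg ?_
  · exact hfirst.trans (le_mul_of_one_le_left (exp_pos _).le (le_add_of_nonneg_right (sq_nonneg z)))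
  · exact hsecond.trans (by gcongr; linarith)
end

section
/- For each fixed z ∈ ℝ, lim_{d→∞} [cos^d(z/√d) − (d−1) cos^{d−2}(z/√d) sin²(z/√d)] = (1 − z²) exp(−z²/2). -/
/-!
Since `cos x = 1 - 2 sin² (x / 2)` and `n sin² (c / √n) = c² sinc² (c / √n) → c²`, the base
`cos (z / √d)` is `1 + g d` with `d · g d → -z² / 2`, so `cos (z / √d) ^ d → exp (-z² / 2)`.
The second term is `cos (z / √d) ^ (d - 2)`, which has the same limit because the base tends
to `1`, times `(d - 1) sin² (z / √d) → z²`.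
-/

open Real Filter Topology

theorem Real.mul_sinc (x : ℝ) : x * sinc x = sin x := by
  rcases eq_or_ne x 0 with rfl | hx
  · simp
  · rw [sinc_of_ne_zero hx, mul_div_cancel₀ _ hx]

theorem tendsto_const_div_sqrt_natCast_nhds_zero (c : ℝ) :
    Tendsto (fun n : ℕ => c / √n) atTop (𝓝 0) :=
  tendsto_const_nhds.div_atTop
    (tendsto_sqrt_atTop.comp tendsto_natCast_atTop_atTop)

theorem tendsto_natCast_mul_sin_div_sqrt_sq (c : ℝ) :
    Tendsto (fun n : ℕ => n * sin (c / √n) ^ 2) atTop (𝓝 (c ^ 2)) := by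
  have hsinc : Tendsto (fun n : ℕ => c ^ 2 * sinc (c / √n) ^ 2) atTop (𝓝 (c ^ 2 * 1 ^ 2)) :=
    tendsto_const_nhds.mul <| Tendsto.pow
      ((continuous_sinc.tendsto' 0 1 sinc_zero).comp (tendsto_const_div_sqrt_natCast_nhds_zero c)) 2
  rw [one_pow, mul_one] at hsinc
  refine hsinc.congr' ?_
  filter_upwards [eventually_ne_atTop 0] with n hn
  rw [← mul_sinc, mul_pow, div_pow, sq_sqrt n.cast_nonneg]
  field_simp

theorem tendsto_cos_div_sqrt_pow (z : ℝ) :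
    Tendsto (fun n : ℕ => cos (z / √n) ^ n) atTop (𝓝 (exp (-z ^ 2 / 2))) := by
  have hlin : Tendsto (fun n : ℕ => n * (-2 * sin (z / 2 / √n) ^ 2)) atTop (𝓝 (-z ^ 2 / 2)) := by
    rw [show -z ^ 2 / 2 = -2 * (z / 2) ^ 2 by ring]
    exact ((tendsto_natCast_mul_sin_div_sqrt_sq (z / 2)).const_mul (-2)).congr fun n => by ring
  refine (tendsto_one_add_pow_exp_of_tendsto hlin).congr fun n => ?_
  rw [show z / √n = 2 * (z / 2 / √n) by ring, cos_two_mul_eq_one_sub]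
  ring

theorem tendsto_pow_sub_of_tendsto_pow {𝕜 : Type*} [NormedField 𝕜] {u : ℕ → 𝕜} {L : 𝕜}
    (k : ℕ) (hu : Tendsto u atTop (𝓝 1)) (h : Tendsto (fun n => u n ^ n) atTop (𝓝 L)) :
    Tendsto (fun n => u n ^ (n - k)) atTop (𝓝 L) := by
  have hdiv := h.div (hu.pow k) (by simp)
  rw [one_pow, div_one] at hdiv
  refine hdiv.congr' ?_
  filter_upwards [hu.eventually_ne one_ne_zero, eventually_ge_atTop k] with n hn hk
  rw [Pi.div_apply, pow_sub₀ _ hn hk, div_eq_mul_inv]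

/-- Pointwise limit: `cos^d(z/√d) - (d-1) cos^{d-2}(z/√d) sin²(z/√d) → (1-z²) exp(-z²/2)`. -/
theorem kostlan_B_tendsto (z : ℝ) :
    Tendsto (fun d : ℕ =>
        Real.cos (z / Real.sqrt d) ^ d
          - (d - 1 : ℝ) * Real.cos (z / Real.sqrt d) ^ (d - 2)
            * Real.sin (z / Real.sqrt d) ^ 2)
      atTop (nhds ((1 - z ^ 2) * Real.exp (-z ^ 2 / 2))) := by
  have harg := tendsto_const_div_sqrt_natCast_nhds_zero z
  have hcos : Tendsto (fun d : ℕ => cos (z / √d)) atTop (𝓝 1) :=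
    (continuous_cos.tendsto' 0 1 cos_zero).comp harg
  have hsin : Tendsto (fun d : ℕ => sin (z / √d) ^ 2) atTop (𝓝 0) := by
    simpa using ((continuous_sin.tendsto' 0 0 sin_zero).comp harg).pow 2
  have hsin_scaled : Tendsto (fun d : ℕ => (d - 1 : ℝ) * sin (z / √d) ^ 2) atTop (𝓝 (z ^ 2)) := by
    simpa [sub_mul] using (tendsto_natCast_mul_sin_div_sqrt_sq z).sub hsin
  have hpow := tendsto_cos_div_sqrt_pow z
  convert hpow.sub ((tendsto_pow_sub_of_tendsto_pow 2 hcos hpow).mul hsin_scaled) using 2 <;> ring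
end
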